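/- arXiv:2406.09857 — 3 statements merged into one kernel-verified Lean document; each statement's English description precedes it below -/
import Mathlib

section
/- Let E ⊆ ℕ^k be finite, with projection onto the first j coordinates equal to X_1 × ⋯ × X_j where each |X_i| > d for a fixed d ≥ 0. Then for every 0 ≤ i < j, (d+1) · N_i(E) ≤ N_{i+1}(E). -/
/-!
Restricting the grid `X_1 × ⋯ × X_j` to its first `i` coordinates gives the grid
`X_1 × ⋯ × X_i`, since every `X_m` is nonempty. Hence `N_i(E) = |X_1| ⋯ |X_i|`, and
`N_{i+1}(E) = N_i(E) · |X_{i+1}| ≥ (d + 1) · N_i(E)`.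
-/

/-- Projection of a tuple onto its first `i` coordinates. -/
def projF (k i : ℕ) (v : Fin k → ℕ) : Fin i → ℕ :=
  fun m => if h : m.1 < k then v ⟨m.1, h⟩ else 0

/-- `N_i(E)`: the number of distinct projections of elements of `E`
onto their first `i` coordinates (with `N_0(E) = 1` for nonempty `E`). -/
def NFirst (k i : ℕ) (E : Finset (Fin k → ℕ)) : ℕ :=
  (E.image (projF k i)).card

open Finset Fintype

theorem Fintype.image_comp_piFinset {ι κ α : Type*} [Fintype ι] [Fintype κ] [DecidableEq ι]
    [DecidableEq κ] [DecidableEq α] {e : κ → ι} (he : Function.Injective e) {X : ι → Finset α}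
    (hX : ∀ a, (X a).Nonempty) :
    (piFinset X).image (· ∘ e) = piFinset (X ∘ e) := by
  ext g
  simp only [mem_image, mem_piFinset, Function.comp_apply]
  constructor
  · rintro ⟨f, hf, rfl⟩ b
    exact hf (e b)
  · intro hg
    refine ⟨Function.extend e g fun a => (hX a).choose, fun a => ?_, Function.extend_comp he _ _⟩
    by_cases ha : ∃ b, e b = a
    · obtain ⟨b, rfl⟩ := ha
      rw [he.extend_apply]
      exact hg b
    · rw [Function.extend_apply' _ _ _ ha]
      exact (hX a).choose_spec

theorem comp_castLE_comp_projF (k : ℕ) {i j : ℕ} (hij : i ≤ j) :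
    (· ∘ Fin.castLE hij) ∘ projF k j = projF k i :=
  rfl

theorem image_projF_eq_piFinset {k i j : ℕ} {E : Finset (Fin k → ℕ)} {X : Fin j → Finset ℕ}
    (hproj : E.image (projF k j) = piFinset X) (hX : ∀ m, (X m).Nonempty) (hij : i ≤ j) :
    E.image (projF k i) = piFinset fun m => X (Fin.castLE hij m) := by
  rw [← comp_castLE_comp_projF k hij, ← image_image, hproj]
  exact image_comp_piFinset (Fin.castLE_injective hij) hX

theorem NFirst_eq_prod_card {k i j : ℕ} {E : Finset (Fin k → ℕ)} {X : Fin j → Finset ℕ}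
    (hproj : E.image (projF k j) = piFinset X) (hX : ∀ m, (X m).Nonempty) (hij : i ≤ j) :
    NFirst k i E = ∏ m : Fin i, (X (Fin.castLE hij m)).card := by
  rw [NFirst, image_projF_eq_piFinset hproj hX hij, card_piFinset]

theorem csf_proj_count_growth_of_product_grid_general
    (k j d : ℕ) (E : Finset (Fin k → ℕ))
    (X : Fin j → Finset ℕ)
    (hproj : E.image (projF k j) = Fintype.piFinset X)
    (hX : ∀ m : Fin j, d < (X m).card) :
    ∀ i : ℕ, i < j → (d + 1) * NFirst k i E ≤ NFirst k (i + 1) E := by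
  intro i hij
  have hne : ∀ m, (X m).Nonempty := fun m => card_pos.mp (Nat.zero_lt_of_lt (hX m))
  rw [NFirst_eq_prod_card hproj hne hij.le, NFirst_eq_prod_card hproj hne hij,
    Fin.prod_univ_castSucc, mul_comm]
  exact Nat.mul_le_mul_left _ (hX ⟨i, hij⟩)

/-- if the projection of `E` onto the first `j` coordinates is a full
Cartesian product `X_1 × ⋯ × X_j` with `|X_i| > d` for all `i`, then
`(d+1) · N_i(E) ≤ N_{i+1}(E)` for all `0 ≤ i < j`. -/
theorem csf_proj_count_growth_of_product_grid
    (k j d : ℕ) (hj : j ≤ k) (E : Finset (Fin k → ℕ))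
    (X : Fin j → Finset ℕ)
    (hproj : E.image (projF k j) = Fintype.piFinset X)
    (hX : ∀ m : Fin j, d < (X m).card) :
    ∀ i : ℕ, i < j → (d + 1) * NFirst k i E ≤ NFirst k (i + 1) E :=
  csf_proj_count_growth_of_product_grid_general k j d E X hproj hX
end

section
/- Soundness of the Taylor form enclosure in one variable: let F be a real polynomial, B = [a,b] a closed interval with midpoint c, m ≥ 1, and let J be an interval containing {F^{(m)}(ξ) | ξ ∈ B}. Define T_m(F, B) = F(c) + F'(c)(B−c) + ⋯ + F^{(m−1)}(c)(B−c)^{m−1}/(m−1)! + J·(B−c)^m/m!, computed in interval arithmetic. Then F(x) ∈ T_m(F, B) for every x ∈ B. In particular, 0 ∉ T_m(F, B) implies F has no zero in B. -/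
/-! Taylor's theorem with Lagrange remainder at `c` writes `F x` as the Taylor sum at
`t = x - c ∈ B - c` plus the remainder with coefficient `F^{(m)}(ξ)` for some `ξ` between `c`
and `x`. Since `c ∈ B`, also `ξ ∈ B`, so this coefficient lies in `J` and `F x` is one of the
pointwise values that `T` contains. -/

open Set Polynomial Nat

theorem Polynomial.iteratedDeriv_eval {𝕜 : Type*} [NontriviallyNormedField 𝕜] (p : 𝕜[X])
    (n : ℕ) : iteratedDeriv n (fun x ↦ p.eval x) = fun x ↦ (derivative^[n] p).eval x := by
  induction n with
  | zero => simp
  | succ n ih =>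
    ext x
    rw [iteratedDeriv_succ, ih, Function.iterate_succ_apply', Polynomial.deriv]

theorem Polynomial.contDiff_eval {𝕜 : Type*} [NontriviallyNormedField 𝕜] (p : 𝕜[X])
    (n : WithTop ℕ∞) : ContDiff 𝕜 n (fun x ↦ p.eval x) := by
  simpa [coe_aeval_eq_eval] using p.contDiff_aeval (𝕜 := 𝕜) n

theorem taylorWithinEval_eq_sum_iteratedDeriv {f : ℝ → ℝ} {n : ℕ} (hf : ContDiff ℝ n f)
    {s : Set ℝ} (hs : UniqueDiffOn ℝ s) {x₀ : ℝ} (hx₀ : x₀ ∈ s) (x : ℝ) :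
    taylorWithinEval f n s x₀ x
      = ∑ i ∈ Finset.range (n + 1), iteratedDeriv i f x₀ / i ! * (x - x₀) ^ i := by
  rw [taylor_within_apply]
  refine Finset.sum_congr rfl fun i hi ↦ ?_
  have hin : (i : WithTop ℕ∞) ≤ n := by exact_mod_cast Nat.lt_succ_iff.mp (Finset.mem_range.mp hi)
  rw [iteratedDerivWithin_eq_iteratedDeriv hs ((hf.of_le hin).contDiffAt) hx₀, smul_eq_mul]
  ring

theorem exists_taylor_lagrange {f : ℝ → ℝ} {m : ℕ} (hf : ContDiff ℝ m f) (x₀ x : ℝ) :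
    ∃ ξ ∈ uIcc x₀ x, f x = ∑ i ∈ Finset.range m, iteratedDeriv i f x₀ / i ! * (x - x₀) ^ i
      + iteratedDeriv m f ξ * (x - x₀) ^ m / m ! := by
  rcases m with _ | n
  · exact ⟨x, right_mem_uIcc, by simp⟩
  rcases eq_or_ne x₀ x with rfl | hne
  · exact ⟨x₀, left_mem_uIcc, by simp [Finset.sum_range_succ']⟩
  obtain ⟨ξ, hξ, hrem⟩ := taylor_mean_remainder_lagrange_iteratedDeriv hne hf.contDiffOn
  refine ⟨ξ, uIoo_subset_uIcc_self hξ, ?_⟩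
  rw [taylorWithinEval_eq_sum_iteratedDeriv (hf.of_le (by norm_cast; omega))
    (uniqueDiffOn_uIcc hne) left_mem_uIcc] at hrem
  linarith

theorem Polynomial.exists_taylor_lagrange (p : ℝ[X]) (m : ℕ) (x₀ x : ℝ) :
    ∃ ξ ∈ uIcc x₀ x, p.eval x
      = ∑ i ∈ Finset.range m, (derivative^[i] p).eval x₀ / i ! * (x - x₀) ^ i
        + (derivative^[m] p).eval ξ * (x - x₀) ^ m / m ! := by
  simpa only [p.iteratedDeriv_eval] using _root_.exists_taylor_lagrange (p.contDiff_eval m) x₀ x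

theorem taylor_form_enclosure_sound_general
    (F : Polynomial ℝ) (a b : ℝ) (m : ℕ)
    (c : ℝ) (hc : c = (a + b) / 2) (J T : Set ℝ)
    (hJ : ∀ ξ ∈ Set.Icc a b, (Polynomial.derivative^[m] F).eval ξ ∈ J)
    (hT : ∀ t ∈ Set.Icc (a - c) (b - c), ∀ r ∈ J,
      (∑ i ∈ Finset.range m,
          (Polynomial.derivative^[i] F).eval c / (Nat.factorial i) * t ^ i)
        + r * t ^ m / (Nat.factorial m) ∈ T) :
    (∀ x ∈ Set.Icc a b, F.eval x ∈ T) ∧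
    (0 ∉ T → ∀ x ∈ Set.Icc a b, F.eval x ≠ 0) := by
  have enclosure : ∀ x ∈ Icc a b, F.eval x ∈ T := by
    intro x hx
    have hcB : c ∈ Icc a b := by constructor <;> linarith [hx.1, hx.2]
    obtain ⟨ξ, hξ, htaylor⟩ := F.exists_taylor_lagrange m c x
    rw [htaylor]
    exact hT (x - c) ⟨by linarith [hx.1], by linarith [hx.2]⟩ _
      (hJ ξ (uIcc_subset_Icc hcB hx hξ))
  exact ⟨enclosure, fun h0 x hx hzero ↦ h0 (hzero ▸ enclosure x hx)⟩

/-- soundness of the Taylor form enclosure in one variable. If `J`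
encloses the `m`-th derivative of the real polynomial `F` on `B = [a,b]` with
midpoint `c`, and `T` is the interval obtained by computing
`F(c) + F'(c)(B−c) + ⋯ + F^{(m−1)}(c)(B−c)^{m−1}/(m−1)! + J·(B−c)^m/m!` in
interval arithmetic (so that `T` contains all pointwise values), then
`F(x) ∈ T` for all `x ∈ B`; in particular `0 ∉ T` implies `F` has no zero in `B`. -/
theorem taylor_form_enclosure_sound
    (F : Polynomial ℝ) (a b : ℝ) (hab : a ≤ b) (m : ℕ) (hm : 1 ≤ m)
    (c : ℝ) (hc : c = (a + b) / 2) (J T : Set ℝ)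
    (hJ : ∀ ξ ∈ Set.Icc a b, (Polynomial.derivative^[m] F).eval ξ ∈ J)
    (hT : ∀ t ∈ Set.Icc (a - c) (b - c), ∀ r ∈ J,
      (∑ i ∈ Finset.range m,
          (Polynomial.derivative^[i] F).eval c / (Nat.factorial i) * t ^ i)
        + r * t ^ m / (Nat.factorial m) ∈ T) :
    (∀ x ∈ Set.Icc a b, F.eval x ∈ T) ∧
    (0 ∉ T → ∀ x ∈ Set.Icc a b, F.eval x ≠ 0) :=
  taylor_form_enclosure_sound_general F a b m c hc J T hJ hT
end

section
/- Interval Newton fixed-point criterion in one variable: let F : ℝ → ℝ be continuously differentiable, B = [a,b] with midpoint c, and let S be an interval with F'(x) ∈ S for all x ∈ B and 0 ∉ S. If the interval N(B) = c − F(c)/S (computed with interval arithmetic) satisfies N(B) ⊆ B, then F has a zero in B. -/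
/-!
For `x ∈ [a, b]` the mean value theorem gives `F x = F c + s (x - c)` with `s = F' ξ ∈ S`, that is
`F x = s (x - n)` for the Newton point `n = c - F c / s`, which lies in `[a, b]` by hypothesis.
Hence `F a F b = s₁ s₂ (a - n₁)(b - n₂)` with `(a - n₁)(b - n₂) ≤ 0`. By Darboux's theorem `F'`
cannot change sign on `[a, b]` without vanishing there, and `0 ∉ S`, so `s₁ s₂ > 0`. Thus
`F a F b ≤ 0` and the intermediate value theorem gives the zero.
-/

open Set

theorem Set.OrdConnected.zero_mem_of_mul_nonpos {α : Type*} [Ring α] [LinearOrder α]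
    [IsStrictOrderedRing α] {T : Set α} (hT : T.OrdConnected) {x y : α} (hx : x ∈ T)
    (hy : y ∈ T) (hxy : x * y ≤ 0) : (0 : α) ∈ T := by
  rcases mul_nonpos_iff.mp hxy with ⟨hx0, hy0⟩ | ⟨hx0, hy0⟩
  · exact hT.out hy hx ⟨hy0, hx0⟩
  · exact hT.out hx hy ⟨hx0, hy0⟩

theorem exists_mem_uIcc_eq_add_deriv_mul_sub {f : ℝ → ℝ} (hf : Differentiable ℝ f) (x y : ℝ) :
    ∃ ξ ∈ uIcc x y, f y = f x + deriv f ξ * (y - x) := by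
  wlog hxy : x < y generalizing x y
  · rcases (not_lt.mp hxy).eq_or_lt with rfl | hyx
    · exact ⟨y, left_mem_uIcc, by ring⟩
    obtain ⟨ξ, hξ, h⟩ := this y x hyx
    exact ⟨ξ, uIcc_comm x y ▸ hξ, by linarith⟩
  obtain ⟨ξ, hξ, hslope⟩ := exists_deriv_eq_slope f hxy hf.continuous.continuousOn
    fun z _ => (hf z).differentiableWithinAt
  refine ⟨ξ, Icc_subset_uIcc (Ioo_subset_Icc_self hξ), ?_⟩
  rw [hslope, div_mul_cancel₀ _ (sub_ne_zero.mpr hxy.ne')]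
  ring

theorem exists_eq_deriv_mul_sub_newtonPoint {F : ℝ → ℝ} (hF : Differentiable ℝ F)
    {a b c x : ℝ} {S : Set ℝ} (hc : c ∈ Icc a b) (hx : x ∈ Icc a b)
    (hS : ∀ ξ ∈ Icc a b, deriv F ξ ∈ S) (h0 : (0 : ℝ) ∉ S)
    (hN : ∀ s ∈ S, c - F c / s ∈ Icc a b) :
    ∃ ξ ∈ Icc a b, ∃ n ∈ Icc a b, F x = deriv F ξ * (x - n) := by
  obtain ⟨ξ, hξ, hmvt⟩ := exists_mem_uIcc_eq_add_deriv_mul_sub hF c x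
  have hξB : ξ ∈ Icc a b := uIcc_subset_Icc hc hx hξ
  have hs : deriv F ξ ≠ 0 := fun h => h0 (h ▸ hS ξ hξB)
  refine ⟨ξ, hξB, c - F c / deriv F ξ, hN _ (hS ξ hξB), ?_⟩
  rw [hmvt]
  field_simp
  ring

/-- interval Newton fixed-point criterion in one variable. If `F` is
continuously differentiable on `B = [a,b]` with midpoint `c`, `S` encloses `F'` on
`B`, `0 ∉ S`, and the interval Newton image `N(B) = c − F(c)/S` is contained in
`B`, then `F` has a zero in `B`. -/
theorem interval_newton_existence
    (F : ℝ → ℝ) (hF : ContDiff ℝ 1 F)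
    (a b : ℝ) (hab : a ≤ b) (c : ℝ) (hc : c = (a + b) / 2)
    (S : Set ℝ)
    (hS : ∀ x ∈ Set.Icc a b, deriv F x ∈ S)
    (h0 : (0 : ℝ) ∉ S)
    (hN : {y : ℝ | ∃ s ∈ S, y = c - F c / s} ⊆ Set.Icc a b) :
    ∃ x ∈ Set.Icc a b, F x = 0 := by
  have hdiff : Differentiable ℝ F := hF.differentiable one_ne_zero
  have hcB : c ∈ Icc a b := ⟨by linarith, by linarith⟩
  have hN' : ∀ s ∈ S, c - F c / s ∈ Icc a b := fun s hs => hN ⟨s, hs, rfl⟩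
  obtain ⟨ξa, hξa, na, hna, hFa⟩ :=
    exists_eq_deriv_mul_sub_newtonPoint hdiff hcB (left_mem_Icc.mpr hab) hS h0 hN'
  obtain ⟨ξb, hξb, nb, hnb, hFb⟩ :=
    exists_eq_deriv_mul_sub_newtonPoint hdiff hcB (right_mem_Icc.mpr hab) hS h0 hN'
  have hderiv_pos : 0 < deriv F ξa * deriv F ξb := by
    by_contra! hle
    obtain ⟨ξ, hξ, hξ0⟩ := (ordConnected_Icc.image_deriv fun x _ => hdiff x)
      |>.zero_mem_of_mul_nonpos (mem_image_of_mem _ hξa) (mem_image_of_mem _ hξb) hle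
    exact h0 (hξ0 ▸ hS ξ hξ)
  have hFab : F a * F b ≤ 0 := by
    rw [hFa, hFb, mul_mul_mul_comm]
    exact mul_nonpos_of_nonneg_of_nonpos hderiv_pos.le
      (mul_nonpos_of_nonpos_of_nonneg (by linarith [hna.1]) (by linarith [hnb.2]))
  exact (isPreconnected_Icc.image F hdiff.continuous.continuousOn).ordConnected
    |>.zero_mem_of_mul_nonpos (mem_image_of_mem _ (left_mem_Icc.mpr hab))
      (mem_image_of_mem _ (right_mem_Icc.mpr hab)) hFab
end
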